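/- Let N ≥ 2, let d_1, …, d_N ≥ 1, and let {x_1^{(i)} ⊗ ⋯ ⊗ x_N^{(i)}}_{i∈X} be a finite family of fully product vectors in ℂ^{d_1} ⊗ ⋯ ⊗ ℂ^{d_N} with |X| ≥ d_1 + ⋯ + d_N − N + 1. Assume that for every k ∈ {1,…,N} and every subset T ⊆ X with |T| = d_k the vectors {x_k^{(i)} : i ∈ T} span ℂ^{d_k}. Then no nonzero fully product vector y_1 ⊗ ⋯ ⊗ y_N is orthogonal to all members of the family; that is, if ⟨x_1^{(i)} ⊗ ⋯ ⊗ x_N^{(i)}, y_1 ⊗ ⋯ ⊗ y_N⟩ = 0 for all i ∈ X, then y_1 ⊗ ⋯ ⊗ y_N = 0. -/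

import Mathlib

/-!
The inner product of two fully product vectors factors as `∏ k, ⟪x_k, y_k⟫`, so if all `y_k ≠ 0`
then every `i ∈ X` lies in some `S_k = {i | ⟪x_k^{(i)}, y_k⟫ = 0}`. As any `d_k` of the
`x_k^{(i)}` span `ℂ^{d_k}`, fewer than `d_k` of them are orthogonal to `y_k ≠ 0`. Covering `X`
by the `S_k` then gives `|X| + N ≤ ∑ k, d_k`, contradicting the cardinality assumption.
-/

open scoped InnerProductSpace

noncomputable section

/-- The tensor product `v 1 ⊗ ⋯ ⊗ v N` of a family of local vectors `v i ∈ ℂ^{d i}`,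
realized in `ℂ^{d 1} ⊗ ⋯ ⊗ ℂ^{d N} ≅ ℂ^{∏ d i}`, whose coordinate at a tuple `f` of
local indices is `∏ i, (v i) (f i)`. -/
def prodVec {N : ℕ} {d : Fin N → ℕ} (v : ∀ i, EuclideanSpace ℂ (Fin (d i))) :
    EuclideanSpace ℂ (∀ i, Fin (d i)) :=
  WithLp.toLp 2 (fun f => ∏ i, v i (f i))

open Finset

section InnerProductSpace

variable {𝕜 E : Type*} [RCLike 𝕜] [NormedAddCommGroup E] [InnerProductSpace 𝕜 E]

theorem eq_zero_of_forall_inner_eq_zero_of_span_eq_top {s : Set E}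
    (hs : Submodule.span 𝕜 s = ⊤) {y : E} (hy : ∀ u ∈ s, ⟪u, y⟫_𝕜 = 0) : y = 0 := by
  have hortho : Submodule.span 𝕜 s ⟂ 𝕜 ∙ y :=
    Submodule.isOrtho_span.2 fun u hu v hv => by rw [Set.mem_singleton_iff.1 hv]; exact hy u hu
  rwa [hs, Submodule.isOrtho_top_left, Submodule.span_singleton_eq_bot] at hortho

theorem card_filter_inner_eq_zero_lt {X : Type*} [Fintype X] {n : ℕ} (v : X → E)
    (hspan : ∀ T : Finset X, #T = n → Submodule.span 𝕜 (v '' ↑T) = ⊤)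
    {y : E} (hy : y ≠ 0) [DecidablePred fun i => ⟪v i, y⟫_𝕜 = 0] :
    #{i | ⟪v i, y⟫_𝕜 = 0} < n := by
  by_contra! hcard
  obtain ⟨T, hTS, hTcard⟩ := exists_subset_card_eq hcard
  refine hy (eq_zero_of_forall_inner_eq_zero_of_span_eq_top (hspan T hTcard) ?_)
  rintro _ ⟨i, hi, rfl⟩
  exact (mem_filter.1 (hTS hi)).2

end InnerProductSpace

theorem card_add_card_le_sum_of_forall_exists {ι X : Type*} [Fintype ι] [Fintype X]
    (p : ι → X → Prop) [∀ k, DecidablePred (p k)] (d : ι → ℕ)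
    (hcover : ∀ i, ∃ k, p k i) (hlt : ∀ k, #{i | p k i} < d k) :
    Fintype.card X + Fintype.card ι ≤ ∑ k, d k := by
  classical
  have hX : Fintype.card X ≤ ∑ k, #{i | p k i} :=
    calc Fintype.card X = #(univ : Finset X) := card_univ.symm
      _ ≤ #(univ.biUnion fun k => {i | p k i}) := card_le_card fun i _ => by simpa using hcover i
      _ ≤ ∑ k, #{i | p k i} := card_biUnion_le
  calc Fintype.card X + Fintype.card ι ≤ ∑ k, (#{i | p k i} + 1) := by
        rw [sum_add_distrib, sum_const, card_univ, smul_eq_mul, mul_one]; omega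
    _ ≤ ∑ k, d k := sum_le_sum fun k _ => hlt k

theorem inner_prodVec {N : ℕ} {d : Fin N → ℕ} (v w : ∀ i, EuclideanSpace ℂ (Fin (d i))) :
    ⟪prodVec v, prodVec w⟫_ℂ = ∏ i, ⟪v i, w i⟫_ℂ := by
  simp only [prodVec, PiLp.inner_apply, RCLike.inner_apply, map_prod, ← prod_mul_distrib]
  rw [prod_univ_sum, Fintype.piFinset_univ]

theorem prodVec_eq_zero {N : ℕ} {d : Fin N → ℕ} {v : ∀ i, EuclideanSpace ℂ (Fin (d i))}
    {k : Fin N} (hk : v k = 0) : prodVec v = 0 := by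
  ext f
  exact prod_eq_zero (mem_univ k) (by rw [hk]; rfl)

theorem stmt1_general (N : ℕ) (d : Fin N → ℕ)
    (X : Type) [Fintype X]
    (x : X → ∀ i, EuclideanSpace ℂ (Fin (d i)))
    (hcard : (∑ i, d i) - N + 1 ≤ Fintype.card X)
    (hspan : ∀ k : Fin N, ∀ T : Finset X, T.card = d k →
      Submodule.span ℂ ((fun i => x i k) '' ↑T) = ⊤)
    (y : ∀ i, EuclideanSpace ℂ (Fin (d i)))
    (horth : ∀ i : X, ⟪prodVec (x i), prodVec y⟫_ℂ = 0) :
    prodVec y = 0 := by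
  classical
  by_contra hy
  have hyk : ∀ k, y k ≠ 0 := fun k hk => hy (prodVec_eq_zero hk)
  have hcover : ∀ i, ∃ k, ⟪x i k, y k⟫_ℂ = 0 := fun i => by
    obtain ⟨k, -, hk⟩ := prod_eq_zero_iff.1 ((inner_prodVec _ _).symm.trans (horth i))
    exact ⟨k, hk⟩
  have hsum := card_add_card_le_sum_of_forall_exists (fun k i => ⟪x i k, y k⟫_ℂ = 0) d hcover
    fun k => card_filter_inner_eq_zero_lt (fun i => x i k) (hspan k) (hyk k)
  rw [Fintype.card_fin] at hsum
  omega

/-- If `{x_1^{(i)} ⊗ ⋯ ⊗ x_N^{(i)}}_{i ∈ X}` is a family of fully product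
vectors in `ℂ^{d_1} ⊗ ⋯ ⊗ ℂ^{d_N}` with `|X| ≥ d_1 + ⋯ + d_N − N + 1` such that for each `k`
every `d_k`-tuple of the local vectors `x_k^{(i)}` spans `ℂ^{d_k}`, then no nonzero fully
product vector is orthogonal to all members of the family. -/
theorem stmt1 (N : ℕ) (hN : 2 ≤ N) (d : Fin N → ℕ) (hd : ∀ i, 1 ≤ d i)
    (X : Type) [Fintype X]
    (x : X → ∀ i, EuclideanSpace ℂ (Fin (d i)))
    (hcard : (∑ i, d i) - N + 1 ≤ Fintype.card X)
    (hspan : ∀ k : Fin N, ∀ T : Finset X, T.card = d k →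
      Submodule.span ℂ ((fun i => x i k) '' ↑T) = ⊤)
    (y : ∀ i, EuclideanSpace ℂ (Fin (d i)))
    (horth : ∀ i : X, ⟪prodVec (x i), prodVec y⟫_ℂ = 0) :
    prodVec y = 0 :=
  stmt1_general N d X x hcard hspan y horth
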